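/- arXiv:1205.1248 — 2 statements merged into one kernel-verified Lean document; each statement's English description precedes it below -/
import Mathlib

section
/- For every admissible list A of integers, its adjoint A* satisfies (A*).reverse = (A.reverse)* and d(A) = d(A*). -/
/-!
Write `d` for `chainD`. The pair `(d A, d A.tail)` is the first column of the continuant matrix
`∏ !![aᵢ, -1; 1, 0]`, which has determinant `1`, and conjugating its transpose by `diag(1, -1)`
gives the continuant matrix of `A.reverse`. Hence `d A.reverse = d A` and
`d A.tail · d A.reverse.tail ≡ 1 (mod d A)`. For admissible `A` moreover `0 < d A.tail < d A`,
so `e A = d A.tail / d A` is a reduced fraction, from which `A` is recovered entry by entry as for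
a Hirzebruch–Jung continued fraction.

Comparing reduced fractions in `e As = 1 - e A.reverse` gives `d As = d A` and
`d As.tail = d A - d A.reverse.tail`; inverting modulo `d A` gives
`d As.reverse.tail = d A - d A.tail`, that is, `e As.reverse = 1 - e A = e Ar`.
-/

/-- Discriminant of a linear chain: determinant of the tridiagonal matrix. -/
def chainD : List ℤ → ℤ
  | [] => 1
  | [a] => a
  | a :: b :: L => a * chainD (b :: L) - chainD L

/-- A list is admissible if it is nonempty and all entries are at least 2. -/
def Admissible (A : List ℤ) : Prop := A ≠ [] ∧ ∀ x ∈ A, 2 ≤ x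

/-- Inductance e(A) = d(Ā)/d(A). -/
def inductance (A : List ℤ) : ℚ := (chainD A.tail : ℚ) / (chainD A : ℚ)

/-- Plumbing concatenation ⋆ of linear chains. -/
def pstar : List ℤ → List ℤ → List ℤ
  | [], B => B
  | A, [] => A
  | [a], b :: B => (a + b - 1) :: B
  | a :: A, B => a :: pstar A B

/-- TW n : the list of n copies of 2. -/
def TW (n : ℕ) : List ℤ := List.replicate n 2

def chainMatrix (a : ℤ) : Matrix (Fin 2) (Fin 2) ℤ := !![a, -1; 1, 0]

def continuant (A : List ℤ) : Matrix (Fin 2) (Fin 2) ℤ := (A.map chainMatrix).prod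

@[simp]
lemma continuant_nil : continuant [] = 1 := rfl

lemma continuant_cons (a : ℤ) (L : List ℤ) :
    continuant (a :: L) = chainMatrix a * continuant L := List.prod_cons

lemma continuant_append (A B : List ℤ) : continuant (A ++ B) = continuant A * continuant B := by
  simp only [continuant, List.map_append, List.prod_append]

@[simp]
lemma continuant_cons_zero_zero (a : ℤ) (L : List ℤ) :
    continuant (a :: L) 0 0 = a * continuant L 0 0 - continuant L 1 0 := by
  simp [continuant_cons, chainMatrix, Matrix.mul_apply, Fin.sum_univ_two, sub_eq_add_neg]

@[simp]
lemma continuant_cons_one_zero (a : ℤ) (L : List ℤ) :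
    continuant (a :: L) 1 0 = continuant L 0 0 := by
  simp [continuant_cons, chainMatrix, Matrix.mul_apply, Fin.sum_univ_two]

lemma continuant_zero_zero : ∀ A : List ℤ, continuant A 0 0 = chainD A
  | [] => rfl
  | [a] => by simp [chainD]
  | a :: b :: L => by
    rw [continuant_cons_zero_zero, continuant_zero_zero (b :: L), continuant_cons_one_zero,
      continuant_zero_zero L, chainD]

lemma continuant_one_zero {A : List ℤ} (hA : A ≠ []) : continuant A 1 0 = chainD A.tail := by
  obtain ⟨a, L, rfl⟩ := List.exists_cons_of_ne_nil hA
  rw [continuant_cons_one_zero, continuant_zero_zero, List.tail_cons]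

lemma det_chainMatrix (a : ℤ) : (chainMatrix a).det = 1 := by
  simp [chainMatrix, Matrix.det_fin_two_of]

lemma det_continuant (A : List ℤ) : (continuant A).det = 1 := by
  induction A with
  | nil => simp
  | cons a L ih => rw [continuant_cons, Matrix.det_mul, det_chainMatrix, ih, one_mul]

open Matrix in
lemma continuant_reverse (A : List ℤ) :
    continuant A.reverse = !![1, 0; 0, -1] * (continuant A)ᵀ * !![1, 0; 0, -1] := by
  set J : Matrix (Fin 2) (Fin 2) ℤ := !![1, 0; 0, -1]
  have hJ : J * J = 1 := by simp [J, one_fin_two]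
  have hconj (a : ℤ) : J * (chainMatrix a)ᵀ * J = chainMatrix a := by
    rw [eta_fin_two (chainMatrix a)ᵀ]
    simp [J, chainMatrix]
  induction A with
  | nil => simp [hJ]
  | cons a L ih =>
    rw [List.reverse_cons]
    calc continuant (L.reverse ++ [a])
        = (J * (continuant L)ᵀ * J) * (J * (chainMatrix a)ᵀ * J) := by
          rw [continuant_append, ih, hconj, continuant_cons, continuant_nil, mul_one]
      _ = J * ((continuant L)ᵀ * (J * J) * (chainMatrix a)ᵀ) * J := by
          simp only [Matrix.mul_assoc]
      _ = J * (continuant (a :: L))ᵀ * J := by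
          rw [hJ, Matrix.mul_one, continuant_cons, transpose_mul]

lemma chainD_reverse (A : List ℤ) : chainD A.reverse = chainD A := by
  rw [← continuant_zero_zero, ← continuant_zero_zero, continuant_reverse]
  simp [Matrix.mul_apply, Fin.sum_univ_two, Matrix.vecMul, dotProduct]

lemma isCoprime_chainD_tail {A : List ℤ} (hA : A ≠ []) : IsCoprime (chainD A.tail) (chainD A) := by
  have hdet := det_continuant A
  rw [Matrix.det_fin_two, continuant_zero_zero, continuant_one_zero hA] at hdet
  refine ⟨-continuant A 0 1, continuant A 1 1, ?_⟩
  linear_combination hdet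

lemma chainD_tail_mul_reverse_tail_modEq {A : List ℤ} (hA : A ≠ []) :
    chainD A.tail * chainD A.reverse.tail ≡ 1 [ZMOD chainD A] := by
  have hdet := det_continuant A
  have hrev : chainD A.reverse.tail = -continuant A 0 1 := by
    rw [← continuant_one_zero (by simpa using hA), continuant_reverse]
    simp [Matrix.mul_apply, Fin.sum_univ_two, Matrix.vecMul, dotProduct]
  rw [Matrix.det_fin_two, continuant_zero_zero, continuant_one_zero hA] at hdet
  exact Int.modEq_iff_dvd.mpr ⟨continuant A 1 1, by rw [hrev]; linear_combination -hdet⟩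

lemma continuant_one_zero_nonneg_and_lt {A : List ℤ} (h : ∀ x ∈ A, 2 ≤ x) :
    0 ≤ continuant A 1 0 ∧ continuant A 1 0 < continuant A 0 0 := by
  induction A with
  | nil => simp
  | cons a L ih =>
    obtain ⟨h0, hlt⟩ := ih fun x hx => h x (List.mem_cons_of_mem a hx)
    have ha : 2 ≤ a := h a List.mem_cons_self
    simp only [continuant_cons_zero_zero, continuant_cons_one_zero]
    constructor <;> nlinarith

lemma Admissible.reverse {A : List ℤ} (hA : Admissible A) : Admissible A.reverse :=
  ⟨by simpa using hA.1, fun x hx => hA.2 x (List.mem_reverse.mp hx)⟩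

lemma continuant_one_zero_eq_zero_iff {A : List ℤ} (h : ∀ x ∈ A, 2 ≤ x) :
    continuant A 1 0 = 0 ↔ A = [] := by
  cases A with
  | nil => simp
  | cons a L =>
    have := continuant_one_zero_nonneg_and_lt fun x hx => h x (List.mem_cons_of_mem a hx)
    simp only [continuant_cons_one_zero, reduceCtorEq, iff_false]
    omega

lemma Admissible.chainD_tail_pos_and_lt {A : List ℤ} (hA : Admissible A) :
    0 < chainD A.tail ∧ chainD A.tail < chainD A := by
  have hbounds := continuant_one_zero_nonneg_and_lt hA.2
  have hne := (continuant_one_zero_eq_zero_iff hA.2).not.mpr hA.1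
  rw [← continuant_one_zero hA.1, ← continuant_zero_zero]
  omega

lemma eq_of_continuant_eq {A B : List ℤ} (hA : ∀ x ∈ A, 2 ≤ x) (hB : ∀ x ∈ B, 2 ≤ x)
    (h0 : continuant A 0 0 = continuant B 0 0) (h1 : continuant A 1 0 = continuant B 1 0) :
    A = B := by
  induction A generalizing B with
  | nil => exact ((continuant_one_zero_eq_zero_iff hB).mp (by simpa using h1.symm)).symm
  | cons a L ih =>
    cases B with
    | nil => exact (continuant_one_zero_eq_zero_iff hA).mp (by simpa using h1)
    | cons b M =>
      have hL : ∀ x ∈ L, 2 ≤ x := fun x hx => hA x (List.mem_cons_of_mem a hx)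
      have hM : ∀ x ∈ M, 2 ≤ x := fun x hx => hB x (List.mem_cons_of_mem b hx)
      obtain ⟨hL0, hL1⟩ := continuant_one_zero_nonneg_and_lt hL
      obtain ⟨hM0, hM1⟩ := continuant_one_zero_nonneg_and_lt hM
      simp only [continuant_cons_zero_zero, continuant_cons_one_zero] at h0 h1
      -- `a * n - x = b * n - y` with `0 ≤ x, y < n` forces `a = b` and `x = y`
      have htail : continuant L 1 0 = continuant M 1 0 := by
        refine Int.eq_of_sub_eq_zero
          (Int.eq_zero_of_abs_lt_dvd (m := continuant L 0 0) ⟨a - b, ?_⟩ ?_)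
        · linear_combination -h0 + b * h1
        · exact abs_sub_lt_iff.mpr ⟨by omega, by omega⟩
      have hab : a = b := mul_right_cancel₀ (by omega : continuant L 0 0 ≠ 0) (by
        linear_combination h0 + htail - b * h1)
      rw [hab, ih hL hM h1 htail]

lemma eq_and_eq_of_div_eq_div_of_isCoprime {a b c d : ℤ} (hb : 0 < b) (hd : 0 < d)
    (hab : IsCoprime a b) (hcd : IsCoprime c d) (h : (a : ℚ) / b = c / d) : a = c ∧ b = d := by
  rw [Int.isCoprime_iff_nat_coprime] at hab hcd
  constructor
  · rw [← Rat.num_div_eq_of_coprime hb hab, h, Rat.num_div_eq_of_coprime hd hcd]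
  · rw [← Rat.den_div_eq_of_coprime hb hab, h, Rat.den_div_eq_of_coprime hd hcd]

lemma Int.eq_of_mul_modEq_one {n a x y : ℤ} (hx : 0 ≤ x) (hxn : x < n) (hy : 0 ≤ y) (hyn : y < n)
    (hax : a * x ≡ 1 [ZMOD n]) (hay : a * y ≡ 1 [ZMOD n]) : x = y := by
  have hxy : x ≡ y [ZMOD n] :=
    calc x = 1 * x := (one_mul x).symm
      _ ≡ a * y * x [ZMOD n] := hay.symm.mul_right x
      _ = a * x * y := by ring
      _ ≡ 1 * y [ZMOD n] := hax.mul_right y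
      _ = y := one_mul y
  rwa [Int.ModEq, Int.emod_eq_of_lt hx hxn, Int.emod_eq_of_lt hy hyn] at hxy

lemma Admissible.chainD_eq_of_inductance_eq_div {A : List ℤ} (hA : Admissible A) {a b : ℤ}
    (hb : 0 < b) (hab : IsCoprime a b) (h : inductance A = a / b) :
    chainD A.tail = a ∧ chainD A = b := by
  obtain ⟨hA0, hA1⟩ := hA.chainD_tail_pos_and_lt
  exact eq_and_eq_of_div_eq_div_of_isCoprime (by omega) hb (isCoprime_chainD_tail hA.1) hab h

lemma one_sub_inductance {A : List ℤ} (hA : chainD A ≠ 0) :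
    1 - inductance A = ((chainD A - chainD A.tail : ℤ) : ℚ) / chainD A := by
  rw [inductance, Int.cast_sub, sub_div, div_self (Int.cast_ne_zero.mpr hA)]

lemma eq_of_inductance_eq {A B : List ℤ} (hA : Admissible A) (hB : Admissible B)
    (h : inductance A = inductance B) : A = B := by
  obtain ⟨hB0, hB1⟩ := hB.chainD_tail_pos_and_lt
  obtain ⟨htail, hd⟩ :=
    hA.chainD_eq_of_inductance_eq_div (by omega) (isCoprime_chainD_tail hB.1) h
  refine eq_of_continuant_eq hA.2 hB.2 ?_ ?_
  · rwa [continuant_zero_zero, continuant_zero_zero]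
  · rwa [continuant_one_zero hA.1, continuant_one_zero hB.1]

lemma Admissible.chainD_eq_of_inductance_eq_one_sub {A B : List ℤ} (hA : Admissible A)
    (hB : Admissible B) (h : inductance B = 1 - inductance A) :
    chainD B.tail = chainD A - chainD A.tail ∧ chainD B = chainD A := by
  obtain ⟨hA0, hA1⟩ := hA.chainD_tail_pos_and_lt
  refine hB.chainD_eq_of_inductance_eq_div (by omega) ?_ ?_
  · simpa only [one_mul, neg_add_eq_sub] using
      (isCoprime_chainD_tail hA.1).neg_left.add_mul_right_left 1
  · rw [h, one_sub_inductance (hA0.trans hA1).ne']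

theorem adjoint_reverse_and_d (A As Ar : List ℤ) (hA : Admissible A) (hAs : Admissible As)
    (hAr : Admissible Ar)
    (h1 : inductance As = 1 - inductance A.reverse)
    (h2 : inductance Ar = 1 - inductance A.reverse.reverse) :
    As.reverse = Ar ∧ chainD A = chainD As := by
  rw [List.reverse_reverse] at h2
  obtain ⟨hAt0, hAt1⟩ := hA.chainD_tail_pos_and_lt
  obtain ⟨hCt0, hCt1⟩ := hAs.reverse.chainD_tail_pos_and_lt
  obtain ⟨hAs_tail, hAs_d⟩ := hA.reverse.chainD_eq_of_inductance_eq_one_sub hAs h1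
  rw [chainD_reverse] at hAs_tail hAs_d hCt1
  have hAs_rev_tail : chainD As.reverse.tail = chainD A - chainD A.tail := by
    refine Int.eq_of_mul_modEq_one (n := chainD A) (a := chainD A - chainD A.reverse.tail)
      hCt0.le (by omega) (by omega) (by omega) ?_ ?_
    · simpa only [hAs_tail, hAs_d] using chainD_tail_mul_reverse_tail_modEq hAs.1
    · refine (Int.modEq_iff_dvd.mpr ⟨chainD A.tail + chainD A.reverse.tail - chainD A, ?_⟩).trans
        (chainD_tail_mul_reverse_tail_modEq hA.1)
      ring
  refine ⟨eq_of_inductance_eq hAs.reverse hAr ?_, hAs_d.symm⟩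
  rw [h2, one_sub_inductance (hAt0.trans hAt1).ne', inductance,
    hAs_rev_tail, chainD_reverse, hAs_d]
end

section
/- For every admissible list A of integers, d(A) = d(overline{A*}) + d(underline{A}), where overline{A*} is the adjoint A* with its first entry removed and underline{A} is A with its last entry removed. -/
/-!
The discriminant satisfies the same three-term recurrence from either end, so `d` is invariant
under reversal and `e(A.reverse) = d(A.dropLast) / d(A)`. Hence the hypothesis says
`d(As.tail) / d(As) = (d(A) - d(A.dropLast)) / d(A)`. Consecutive discriminants are coprime
(the recurrence is a Euclidean step) and positive for entries `≥ 2`, so both sides are reduced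
fractions with positive denominators, and their numerators agree.
-/

theorem chainD_append_pair (b a : ℤ) :
    ∀ L : List ℤ, chainD (L ++ [b, a]) = a * chainD (L ++ [b]) - chainD L
  | [] => by simp only [List.nil_append, chainD]; ring
  | [c] => by simp only [List.singleton_append, chainD]; ring
  | c :: d :: M => by
    have h₁ := chainD_append_pair b a (d :: M)
    have h₂ := chainD_append_pair b a M
    simp only [List.cons_append] at h₁ ⊢
    rw [chainD, h₁, h₂, chainD, chainD]
    ring

theorem chainD_reverse_s9 : ∀ L : List ℤ, chainD L.reverse = chainD L
  | [] => rfl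
  | [_] => rfl
  | a :: b :: L => by
    rw [List.reverse_cons, List.reverse_cons, List.append_assoc, List.singleton_append,
      chainD_append_pair, ← List.reverse_cons, chainD_reverse_s9 (b :: L), chainD_reverse_s9 L, chainD]

theorem chainD_dropLast (L : List ℤ) : chainD L.dropLast = chainD L.reverse.tail := by
  rw [List.tail_reverse, chainD_reverse_s9]

theorem inductance_reverse (L : List ℤ) :
    inductance L.reverse = (chainD L.dropLast : ℚ) / chainD L := by
  rw [inductance, chainD_reverse_s9, chainD_dropLast]

theorem chainD_pos_and_lt_cons {a : ℤ} :
    ∀ {L : List ℤ}, (∀ x ∈ a :: L, 2 ≤ x) → 0 < chainD L ∧ chainD L < chainD (a :: L)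
  | [], h => ⟨one_pos, h a List.mem_cons_self⟩
  | b :: L, h => by
    obtain ⟨hL, hbL⟩ :=
      chainD_pos_and_lt_cons (a := b) fun x hx => h x (List.mem_cons_of_mem a hx)
    have ha := h a List.mem_cons_self
    rw [chainD]
    constructor <;> nlinarith

theorem chainD_pos : ∀ {L : List ℤ}, (∀ x ∈ L, 2 ≤ x) → 0 < chainD L
  | [], _ => one_pos
  | _ :: _, h => (chainD_pos_and_lt_cons h).1.trans (chainD_pos_and_lt_cons h).2

theorem isCoprime_chainD_tail_s9 : ∀ L : List ℤ, IsCoprime (chainD L.tail) (chainD L)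
  | [] => isCoprime_one_left
  | [_] => isCoprime_one_left
  | a :: b :: L => by
    rw [chainD, List.tail_cons, IsCoprime.mul_sub_right_right_iff]
    exact (isCoprime_chainD_tail_s9 (b :: L)).symm

theorem isCoprime_chainD_dropLast (L : List ℤ) : IsCoprime (chainD L.dropLast) (chainD L) := by
  simpa only [← chainD_dropLast, chainD_reverse_s9] using isCoprime_chainD_tail_s9 L.reverse

theorem chainD_eq_adjoint_tail_add_dropLast (A As : List ℤ) (hA : Admissible A)
    (hAs : Admissible As) (h : inductance As = 1 - inductance A.reverse) :
    chainD A = chainD As.tail + chainD A.dropLast := by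
  have hApos := chainD_pos hA.2
  have hcop : IsCoprime (chainD A - chainD A.dropLast) (chainD A) := by
    simpa only [one_mul] using (IsCoprime.mul_sub_right_left_iff (z := 1)).2 (isCoprime_chainD_dropLast A)
  have hfrac : (chainD As.tail : ℚ) / chainD As =
      ((chainD A - chainD A.dropLast : ℤ) : ℚ) / chainD A := by
    rw [← inductance, h, inductance_reverse, Int.cast_sub, sub_div, div_self (by positivity)]
  have hnum := (Rat.div_int_inj (chainD_pos hAs.2) hApos
    (Int.isCoprime_iff_nat_coprime.1 (isCoprime_chainD_tail_s9 As))
    (Int.isCoprime_iff_nat_coprime.1 hcop) hfrac).1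
  omega
end
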